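/- arXiv:1605.02444 — 2 statements merged into one kernel-verified Lean document; each statement's English description precedes it below -/
import Mathlib

section
/- Let A be a non-unital connected noncommutative quasi-shuffle bialgebra and π the unique linear endomorphism of A satisfying Id = π + π ≺ Id. Then π is a projection onto the space Prim(A) of primitive elements, and π(x ≺ y) = 0 for all x ∈ Prim(A) and y ∈ A. -/
open TensorProduct

noncomputable section

/-- Coradical filtration (kernels of iterated reduced coproducts). -/
def corad {k A : Type} [Field k] [AddCommGroup A] [Module k A]
    (Δ : A →ₗ[k] A ⊗[k] A) : ℕ → Submodule k A
  | 0 => ⊥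
  | n + 1 => Submodule.comap Δ (LinearMap.range
      (TensorProduct.map (corad Δ n).subtype (corad Δ n).subtype))

/-- Convolution-type product on `Lin(A,A)`. -/
def convProd {k A : Type} [Field k] [AddCommGroup A] [Module k A]
    (Δ : A →ₗ[k] A ⊗[k] A) (m : A →ₗ[k] A →ₗ[k] A) (f g : A →ₗ[k] A) : A →ₗ[k] A :=
  TensorProduct.lift m ∘ₗ TensorProduct.map f g ∘ₗ Δ

/-- Let `A` be a non-unital connected noncommutative quasi-shuffle bialgebra and `π` the
unique linear endomorphism with `Id = π + π ≺ Id`. Then `π` is a projection onto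
`Prim(A) = Ker Δ̃`, and `π(x ≺ y) = 0` for `x` primitive and `y ∈ A`. -/
theorem pi_projection_on_primitives (k A : Type) [Field k] [AddCommGroup A] [Module k A]
    (prec succ bul : A →ₗ[k] A →ₗ[k] A)
    -- NQSh algebra axioms
    (hbul : ∀ x y z : A, bul (bul x y) z = bul x (bul y z))
    (h1 : ∀ x y z : A, prec (prec x y) z = prec x (prec y z + succ y z + bul y z))
    (h2 : ∀ x y z : A, prec (succ x y) z = succ x (prec y z))
    (h3 : ∀ x y z : A, succ (prec x y + succ x y + bul x y) z = succ x (succ y z))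
    (h5 : ∀ x y z : A, bul (prec x y) z = bul x (succ y z))
    (h6 : ∀ x y z : A, bul (succ x y) z = succ x (bul y z))
    (h7 : ∀ x y z : A, prec (bul x y) z = bul x (prec y z))
    -- the star product
    (star : A →ₗ[k] A →ₗ[k] A)
    (hstar : ∀ x y : A, star x y = prec x y + succ x y + bul x y)
    -- reduced coproduct: coassociative, locally conilpotent (connectedness)
    (Δ : A →ₗ[k] A ⊗[k] A)
    (hcoassoc : (TensorProduct.assoc k A A A).toLinearMap ∘ₗ
        (TensorProduct.map Δ LinearMap.id) ∘ₗ Δ = (TensorProduct.map LinearMap.id Δ) ∘ₗ Δ)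
    (hconil : ∀ a : A, ∃ n : ℕ, a ∈ corad Δ n)
    -- bialgebra compatibilities (non-unital Sweedler formulas)
    (Hprec : ∀ x y : A, Δ (prec x y)
      = TensorProduct.map₂ prec star (Δ x) (Δ y)
        + TensorProduct.map LinearMap.id (star.flip y) (Δ x)
        + TensorProduct.map (prec x) LinearMap.id (Δ y)
        + TensorProduct.map (prec.flip y) LinearMap.id (Δ x)
        + x ⊗ₜ[k] y)
    (Hsucc : ∀ x y : A, Δ (succ x y)
      = TensorProduct.map₂ succ star (Δ x) (Δ y)
        + TensorProduct.map LinearMap.id (star x) (Δ y)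
        + TensorProduct.map (succ x) LinearMap.id (Δ y)
        + TensorProduct.map (succ.flip y) LinearMap.id (Δ x)
        + y ⊗ₜ[k] x)
    (Hbul : ∀ x y : A, Δ (bul x y)
      = TensorProduct.map₂ bul star (Δ x) (Δ y)
        + TensorProduct.map (bul.flip y) LinearMap.id (Δ x)
        + TensorProduct.map (bul x) LinearMap.id (Δ y))
    -- π is the unique solution of Id = π + π ≺ Id
    (π : A →ₗ[k] A)
    (hπ : LinearMap.id = π + convProd Δ prec π LinearMap.id) :
    (∀ x : A, Δ (π x) = 0) ∧
    (∀ x : A, Δ x = 0 → π x = x) ∧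
    (∀ x : A, π (π x) = π x) ∧
    (∀ x y : A, Δ x = 0 → π (prec x y) = 0) := by
  classical
  set L : A ⊗[k] A →ₗ[k] A :=
    TensorProduct.lift prec ∘ₗ TensorProduct.map π LinearMap.id with hLdef
  have hLa : ∀ a b : A, L (a ⊗ₜ[k] b) = prec (π a) b := by
    intro a b
    simp [hLdef]
  have hπeq : LinearMap.id = π + L ∘ₗ Δ := by
    rw [hπ]; rfl
  have hπx : ∀ x : A, π x = x - L (Δ x) := by
    intro x
    have h := congrArg (fun f : A →ₗ[k] A => f x) hπeq
    simp only [LinearMap.id_apply, LinearMap.add_apply, LinearMap.comp_apply] at h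
    exact eq_sub_of_add_eq h.symm
  have hLΔ : ∀ x : A, L (Δ x) = x - π x := by
    intro x; rw [hπx x]; abel
  have key : ∀ n : ℕ, ∀ x : A, x ∈ corad Δ n → Δ (π x) = 0 := by
    intro n
    induction n with
    | zero =>
      intro x hx
      have hx0 : x = 0 := by simpa [corad] using hx
      simp [hx0]
    | succ n ih =>
      intro x hx
      simp only [corad, Submodule.mem_comap, LinearMap.mem_range] at hx
      obtain ⟨t, ht⟩ := hx
      have hL : ∀ s : (corad Δ n) ⊗[k] (corad Δ n),
          Δ (L (TensorProduct.map (corad Δ n).subtype (corad Δ n).subtype s))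
            = TensorProduct.map L LinearMap.id
                ((TensorProduct.assoc k A A A).symm
                  (TensorProduct.map LinearMap.id Δ
                    (TensorProduct.map (corad Δ n).subtype (corad Δ n).subtype s)))
              + TensorProduct.map π LinearMap.id
                  (TensorProduct.map (corad Δ n).subtype (corad Δ n).subtype s) := by
        intro s
        induction s using TensorProduct.induction_on with
        | zero => simp
        | tmul a b =>
          have ha : Δ (π (a : A)) = 0 := ih a a.2
          simp only [TensorProduct.map_tmul, Submodule.coe_subtype, LinearMap.id_apply]
          rw [hLa, Hprec (π (a : A)) (b : A), ha]
          simp only [map_zero, LinearMap.zero_apply, zero_add, add_zero]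
          congr 1
          generalize Δ (b : A) = u
          induction u using TensorProduct.induction_on with
          | zero => simp
          | tmul u v =>
            simp [TensorProduct.assoc_symm_tmul, hLa]
          | add u v hu hv =>
            rw [TensorProduct.tmul_add, map_add, map_add, map_add, hu, hv]
        | add s₁ s₂ h₁ h₂ =>
          simp only [map_add, h₁, h₂]
          abel
      have hco := congrArg (fun f : A →ₗ[k] A ⊗[k] (A ⊗[k] A) => f x) hcoassoc
      simp only [LinearMap.coe_comp, Function.comp_apply, LinearEquiv.coe_coe] at hco
      have hsub : ∀ u : A ⊗[k] A,
          TensorProduct.map L LinearMap.id (TensorProduct.map Δ LinearMap.id u)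
            = u - TensorProduct.map π LinearMap.id u := by
        intro u
        induction u using TensorProduct.induction_on with
        | zero => simp
        | tmul p q =>
          simp only [TensorProduct.map_tmul, LinearMap.id_apply]
          rw [hLΔ p, TensorProduct.sub_tmul]
        | add p q hp hq =>
          simp only [map_add, hp, hq]
          abel
      rw [hπx, map_sub, ← ht, hL t, ht, ← hco, LinearEquiv.symm_apply_apply, hsub]
      abel
  have prim_fix : ∀ x : A, Δ x = 0 → π x = x := by
    intro x hx
    rw [hπx, hx]
    simp
  have key4 : ∀ n : ℕ, ∀ y : A, y ∈ corad Δ n → ∀ x : A, Δ x = 0 → π (prec x y) = 0 := by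
    intro n
    induction n with
    | zero =>
      intro y hy x hx
      have hy0 : y = 0 := by simpa [corad] using hy
      simp [hy0]
    | succ n ih =>
      intro y hy x hx
      simp only [corad, Submodule.mem_comap, LinearMap.mem_range] at hy
      obtain ⟨t, ht⟩ := hy
      have hz : ∀ s : (corad Δ n) ⊗[k] (corad Δ n), L (TensorProduct.map (prec x) LinearMap.id
          (TensorProduct.map (corad Δ n).subtype (corad Δ n).subtype s)) = 0 := by
        intro s
        induction s using TensorProduct.induction_on with
        | zero => simp
        | tmul a b =>
          simp only [TensorProduct.map_tmul, Submodule.coe_subtype, LinearMap.id_apply]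
          rw [hLa, ih a a.2 x hx]
          simp
        | add s₁ s₂ h₁ h₂ =>
          simp only [map_add, h₁, h₂, add_zero]
      rw [hπx, Hprec x y, hx]
      simp only [map_zero, LinearMap.zero_apply, zero_add, add_zero]
      rw [map_add, hLa, prim_fix x hx, ← ht, hz t]
      abel
  refine ⟨?_, prim_fix, ?_, ?_⟩
  · intro x
    obtain ⟨n, hn⟩ := hconil x
    exact key n x hn
  · intro x
    obtain ⟨n, hn⟩ := hconil x
    exact prim_fix (π x) (key n x hn)
  · intro x y hx
    obtain ⟨n, hn⟩ := hconil y
    exact key4 n y hn x hx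
end
end

section
/- For the quasi-shuffle bialgebra T(V) over a commutative algebra V, the unique solution π of Id = π + π ≺ Id on the augmentation ideal equals F_{(1)}, the canonical projection onto V ⊂ T(V). -/
open Finsupp

noncomputable section

variable (k : Type) [Field k] (V : Type)

/-- The free `k`-module on words with letters in `V` (a model of `T(V)`). -/
abbrev TW := List V →₀ k

variable {k V} in
def sg (w : List V) : TW k V := Finsupp.single w 1

/-- The maximum letter of a word over ℕ. -/
def maxOf (s : List ℕ) : ℕ := s.foldr max 0

/-- A packed word (surjection): a word over positive integers whose set of
letters is `{1, …, max}`. -/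
def IsPacked (s : List ℕ) : Prop :=
  (0 ∉ s) ∧ ∀ j : ℕ, 0 < j → j ≤ maxOf s → j ∈ s

variable [NonUnitalCommRing V] [Module k V]

/-- Product of a list of elements of `V` (junk value `0` on the empty list). -/
def prodList : List V → V
  | [] => 0
  | a :: t => t.foldl (· * ·) a

/-- `F_σ` on a word `x₁…x_l`: if `l` equals the length of `σ`, the word
`(∏_{σ(i)=1} x_i) ⋯ (∏_{σ(i)=max σ} x_i)` (products in `V`); `0` otherwise. -/
def FW (σ : List ℕ) (x : List V) : TW k V :=
  if x.length = σ.length then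
    sg ((List.range' 1 (maxOf σ)).map fun j =>
      prodList V ((σ.zip x).filterMap fun p => if p.1 = j then some p.2 else none))
  else 0

/-- `F_σ` as a linear endomorphism of `T(V)`. -/
def FL (σ : List ℕ) : TW k V →ₗ[k] TW k V :=
  Finsupp.lsum k fun x => LinearMap.toSpanSingleton k _ (FW k V σ x)

/-- Composition of surjections `σ ∘ τ` (in one-line notation). -/
def compWord (σ τ : List ℕ) : List ℕ := τ.map fun j => σ.getD (j - 1) 0


/-- Hoffman's quasi-shuffle product on words (product of letters taken in `V`). -/
def qshW : List V → List V → TW k V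
  | [], w => sg w
  | a::v, [] => sg (a::v)
  | a::v, b::w =>
      (qshW v (b::w)).mapDomain (List.cons a) +
      (qshW (a::v) w).mapDomain (List.cons b) +
      (qshW v w).mapDomain (List.cons (a * b))
  termination_by v w => v.length + w.length

/-- Hoffman's half-product `av ≺ bw = a(v ⧢ bw)`. -/
def precW : List V → List V → TW k V
  | [], _ => 0
  | a::v, w => (qshW k V v w).mapDomain (List.cons a)

/-- Bilinear extension of `≺` to `T(V)`. -/
def precL : TW k V →ₗ[k] TW k V →ₗ[k] TW k V :=
  Finsupp.lsum k fun v => LinearMap.toSpanSingleton k _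
    (Finsupp.lsum k fun w => LinearMap.toSpanSingleton k (TW k V) (precW k V v w))

/-- The half-product `f ≺ g` of linear endomorphisms of `T(V)`, induced by the
reduced deconcatenation coproduct and Hoffman's `≺`. -/
def convPrec (f g : TW k V →ₗ[k] TW k V) : TW k V →ₗ[k] TW k V :=
  Finsupp.lsum k fun w => LinearMap.toSpanSingleton k _
    (∑ i ∈ Finset.Ioo 0 w.length,
      precL k V (f (sg (w.take i))) (g (sg (w.drop i))))



set_option linter.unusedSectionVars false

lemma FL_sg (σ : List ℕ) (w : List V) : FL k V σ (sg w) = FW k V σ w := by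
  simp [FL, sg]

lemma precL_sg (v w : List V) : precL k V (sg v) (sg w) = precW k V v w := by
  simp [precL, sg]

lemma convPrec_sg (f g : TW k V →ₗ[k] TW k V) (w : List V) :
    convPrec k V f g (sg w) =
      ∑ i ∈ Finset.Ioo 0 w.length,
        precL k V (f (sg (w.take i))) (g (sg (w.drop i))) := by
  simp [convPrec, sg]

lemma FW_one_single (a : V) : FW k V [1] [a] = sg [a] := by
  simp [FW, maxOf, prodList, List.range', sg]

lemma FW_one_ne (w : List V) (h : w.length ≠ 1) : FW k V [1] w = 0 := by
  simp [FW, h]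

lemma precW_single (a : V) (w : List V) : precW k V [a] w = sg (a :: w) := by
  simp [precW, qshW, sg, Finsupp.mapDomain_single]

/-- For the quasi-shuffle bialgebra `T(V)` over a commutative algebra `V`, any
solution `π` of `Id = π + π ≺ Id` on the augmentation ideal equals `F₍₁₎`, the
canonical projection onto `V ⊂ T(V)` (and `F₍₁₎` is indeed a solution). -/
theorem pi_eq_F1 :
    (∀ w : List V, w ≠ [] →
      sg w = FL k V [1] (sg w) + convPrec k V (FL k V [1]) LinearMap.id (sg w)) ∧
    (∀ π : TW k V →ₗ[k] TW k V,
      (∀ w : List V, w ≠ [] → sg w = π (sg w) + convPrec k V π LinearMap.id (sg w)) →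
      ∀ w : List V, w ≠ [] → π (sg w) = FL k V [1] (sg w)) := by
  have h1 : ∀ w : List V, w ≠ [] →
      sg w = FL k V [1] (sg w) + convPrec k V (FL k V [1]) LinearMap.id (sg w) := by
    intro w hw
    match w with
    | [a] =>
        rw [convPrec_sg]
        rw [show Finset.Ioo 0 [a].length = (∅ : Finset ℕ) from rfl]
        simp [FL_sg, FW_one_single]
    | a :: b :: t =>
        rw [convPrec_sg, FL_sg, FW_one_ne k V _ (by simp),
          Finset.sum_eq_single 1 ?h0 ?h1]
        · simp [FL_sg, FW_one_single, precL_sg, precW_single]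
        case h0 =>
          intro i hi hne
          have hi' := Finset.mem_Ioo.mp hi
          have hlen : ((a :: b :: t).take i).length ≠ 1 := by
            rw [List.length_take]
            simp only [List.length_cons]
            omega
          rw [FL_sg, FW_one_ne k V _ hlen]
          simp
        case h1 =>
          intro h
          refine absurd (Finset.mem_Ioo.mpr ⟨Nat.one_pos, ?_⟩) h
          simp only [List.length_cons]
          omega
  refine ⟨h1, ?_⟩
  intro π hπ
  have key : ∀ n : ℕ, ∀ w : List V, w ≠ [] → w.length ≤ n →
      π (sg w) = FL k V [1] (sg w) := by
    intro n
    induction n with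
    | zero =>
        intro w hw hl
        have := List.length_pos_iff.mpr hw
        omega
    | succ n ih =>
        intro w hw hl
        have e1 := hπ w hw
        have e2 := h1 w hw
        have hsum : convPrec k V π LinearMap.id (sg w)
            = convPrec k V (FL k V [1]) LinearMap.id (sg w) := by
          rw [convPrec_sg, convPrec_sg]
          refine Finset.sum_congr rfl ?_
          intro i hi
          have hi' := Finset.mem_Ioo.mp hi
          have hlen : (w.take i).length = i := by
            rw [List.length_take]
            omega
          have hne : w.take i ≠ [] := by
            intro h
            rw [h] at hlen
            simp at hlen
            omega
          have hle : (w.take i).length ≤ n := by omega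
          rw [ih _ hne hle]
        have p1 : π (sg w) = sg w - convPrec k V π LinearMap.id (sg w) :=
          eq_sub_of_add_eq e1.symm
        have p2 : FL k V [1] (sg w) = sg w - convPrec k V (FL k V [1]) LinearMap.id (sg w) :=
          eq_sub_of_add_eq e2.symm
        rw [p1, p2, hsum]
  intro w hw
  exact key w.length w hw le_rfl
end
end
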